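/- arXiv:2103.02153 — 4 statements merged into one kernel-verified Lean document; each statement's English description precedes it below -/
import Mathlib

section
/- If f and g are distinct orthomorphisms of a finite field F_q, then the Hamming distance H(f,g) is at least 3. -/
def IsOrthomorphism {F : Type*} [Field F] (θ : F → F) : Prop :=
  Function.Bijective θ ∧ Function.Bijective fun x => θ x - x

lemma orth_key {F : Type*} [Field F] (f g : F → F) (hf : Function.Bijective f)
    (hg : Function.Bijective g) {a : F} (ha : f a ≠ g a) :
    ∃ b, b ≠ a ∧ f b ≠ g b ∧ g b = f a := by
  obtain ⟨b, hb⟩ := hg.2 (f a)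
  refine ⟨b, ?_, ?_, hb⟩
  · rintro rfl; exact ha hb.symm
  · intro h
    have hba : b = a := hf.1 (h.trans hb)
    subst hba
    exact ha hb.symm

/-- Distinct orthomorphisms of a finite field differ in at least 3 points. -/
theorem orth_hamming_ge_three {F : Type*} [Field F] [Fintype F]
    (f g : F → F) (hf : IsOrthomorphism f) (hg : IsOrthomorphism g)
    (hne : f ≠ g) : 3 ≤ {a : F | f a ≠ g a}.ncard := by
  set D := {a : F | f a ≠ g a} with hD
  have hfin : D.Finite := Set.toFinite _
  obtain ⟨a, ha⟩ : D.Nonempty := by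
    by_contra h
    push_neg at h
    apply hne
    funext x
    by_contra hx
    have hx' : x ∈ D := hx
    rw [h] at hx'
    exact hx'
  have ha' : f a ≠ g a := ha
  obtain ⟨b, hba, hb, hgb⟩ := orth_key f g hf.1 hg.1 ha'
  by_contra hlt
  push_neg at hlt
  have hsub : ({a, b} : Set F) ⊆ D := by
    intro x hx
    rcases hx with rfl | rfl
    · exact ha
    · exact hb
  have hcard2 : ({a, b} : Set F).ncard = 2 := by
    rw [Set.ncard_pair (Ne.symm hba)]
  have hDeq : ({a, b} : Set F) = D := by
    apply Set.eq_of_subset_of_ncard_le hsub ?_ hfin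
    rw [hcard2]; omega
  have ha2 : (fun x => f x - x) a ≠ (fun x => g x - x) a := by
    exact fun h => ha' (sub_left_injective h)
  obtain ⟨c, hca, hc, hgc⟩ := orth_key _ _ hf.2 hg.2 ha2
  have hcD : c ∈ D := by
    simp only [hD, Set.mem_setOf_eq]
    intro h
    apply hc
    simp [h]
  have hcb : c = b := by
    rw [← hDeq] at hcD
    rcases hcD with rfl | rfl
    · exact absurd rfl hca
    · rfl
  subst hcb
  rw [hgb] at hgc
  exact hba (sub_right_injective hgc)
end

section
/- Let q > 3 and suppose f, g ∈ F_q[x] are reduced orthomorphism polynomials with Hamming distance H(f,g) = 3. Then at least one of f, g has degree exactly q - 3. -/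
/-- If `f, g` are reduced orthomorphism polynomials over `F_q` (q > 3) at Hamming
distance 3, then at least one of them has degree exactly `q - 3`.  We assume the
known Niederreiter–Robinson–Wan bound as a hypothesis. -/
theorem orth_poly_deg_eq {F : Type*} [Field F] [Fintype F]
    (hq : 3 < Fintype.card F)
    (hbound : ∀ h : Polynomial F, h.natDegree < Fintype.card F →
      Function.Bijective (fun x => h.eval x) →
      Function.Bijective (fun x => h.eval x - x) →
      h.natDegree ≤ Fintype.card F - 3)
    (f g : Polynomial F)
    (hfred : f.natDegree < Fintype.card F) (hgred : g.natDegree < Fintype.card F)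
    (hforth : Function.Bijective (fun x => f.eval x) ∧
      Function.Bijective (fun x => f.eval x - x))
    (hgorth : Function.Bijective (fun x => g.eval x) ∧
      Function.Bijective (fun x => g.eval x - x))
    (hH : {a : F | f.eval a ≠ g.eval a}.ncard = 3) :
    f.natDegree = Fintype.card F - 3 ∨ g.natDegree = Fintype.card F - 3 := by
  classical
  set h := f - g with hh
  -- h ≠ 0
  have hne : h ≠ 0 := by
    intro h0
    have hfg : f = g := by
      have := sub_eq_zero.mp h0
      exact this
    rw [hfg] at hH
    simp at hH
  -- the set where f = g is the root set of h, of cardinality q - 3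
  have hcompl : ({a : F | f.eval a ≠ g.eval a} : Set F)ᶜ = {a : F | h.eval a = 0} := by
    ext a
    simp [hh, sub_eq_zero]
  have hcard : ({a : F | h.eval a = 0} : Set F).ncard = Fintype.card F - 3 := by
    rw [← hcompl]
    have := Set.ncard_add_ncard_compl ({a : F | f.eval a ≠ g.eval a} : Set F)
    rw [hH] at this
    rw [Nat.card_eq_fintype_card] at this
    omega
  -- root count bounds degree
  have hroots : ({a : F | h.eval a = 0} : Set F).ncard ≤ h.natDegree := by
    have hsub : ({a : F | h.eval a = 0} : Set F).toFinset ⊆ h.roots.toFinset := by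
      intro a ha
      simp only [Set.mem_toFinset, Set.mem_setOf_eq] at ha
      simp [Polynomial.mem_roots, hne, Polynomial.IsRoot, ha]
    calc ({a : F | h.eval a = 0} : Set F).ncard
        = ({a : F | h.eval a = 0} : Set F).toFinset.card := Set.ncard_eq_toFinset_card' _
      _ ≤ h.roots.toFinset.card := Finset.card_le_card hsub
      _ ≤ Multiset.card h.roots := Multiset.toFinset_card_le _
      _ ≤ h.natDegree := Polynomial.card_roots' h
  have hdeg : Fintype.card F - 3 ≤ h.natDegree := by omega
  have hf3 : f.natDegree ≤ Fintype.card F - 3 := hbound f hfred hforth.1 hforth.2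
  have hg3 : g.natDegree ≤ Fintype.card F - 3 := hbound g hgred hgorth.1 hgorth.2
  have hmax : h.natDegree ≤ max f.natDegree g.natDegree := Polynomial.natDegree_sub_le f g
  rcases max_cases f.natDegree g.natDegree with ⟨he, _⟩ | ⟨he, _⟩ <;> rw [he] at hmax
  · left; omega
  · right; omega
end

section
/- Let θ be an orthomorphism of F_q with θ(0) = 0, θ(b) = c and θ(c) = c - b for some distinct nonzero b, c ∈ F_q. Then the map φ defined by φ(x) = θ(x) for x ∉ {0, b, c}, φ(0) = c - b, φ(c) = c, φ(b) = 0, is an orthomorphism of F_q with H(θ, φ) = 3. -/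
/-! Both `φ` and `x ↦ φ x - x` arise from `θ` and `x ↦ θ x - x` by precomposing with a 3-cycle
of the points `0, b, c` (in opposite orientations), so they stay bijective, and `φ` differs
from `θ` exactly on those three points. -/

namespace Function

variable {α β : Type*} {f g : α → β} {x y z : α}

section CycleModification

variable (hxy : x ≠ y) (hxz : x ≠ z) (hyz : y ≠ z)
  (hg : ∀ w, w ≠ x → w ≠ y → w ≠ z → g w = f w) (hx : g x = f y) (hy : g y = f z) (hz : g z = f x)
include hxy hxz hyz hg hx hy hz

theorem eq_comp_swap_mul_swap [DecidableEq α] : g = f ∘ ⇑(Equiv.swap x y * Equiv.swap y z) := by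
  ext w
  simp only [comp_apply, Equiv.Perm.coe_mul, Equiv.swap_apply_def]
  split_ifs <;> subst_vars <;> simp_all

theorem Bijective.of_three_cycle (hf : Bijective f) : Bijective g := by
  classical
  rw [eq_comp_swap_mul_swap hxy hxz hyz hg hx hy hz]
  exact hf.comp (Equiv.bijective _)

theorem Injective.setOf_ne_eq_of_three_cycle (hf : Injective f) :
    {w | f w ≠ g w} = {x, y, z} := by
  ext w
  simp only [Set.mem_ofPred_eq, Set.mem_insert_iff, Set.mem_singleton_iff]
  constructor
  · intro hw
    by_contra! hne
    exact hw (hg w hne.1 hne.2.1 hne.2.2).symm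
  · rintro (rfl | rfl | rfl)
    · rw [hx]; exact hf.ne hxy
    · rw [hy]; exact hf.ne hyz
    · rw [hz]; exact hf.ne hxz.symm

end CycleModification

end Function

theorem orth_modify_general {F : Type*} [Field F]
    (θ φ : F → F) (b c : F) (hb : b ≠ 0) (hc : c ≠ 0) (hbc : b ≠ c)
    (hθ : IsOrthomorphism θ) (h0 : θ 0 = 0) (hθb : θ b = c) (hθc : θ c = c - b)
    (hφ : ∀ x : F, x ∉ ({0, b, c} : Set F) → φ x = θ x)
    (hφ0 : φ 0 = c - b) (hφc : φ c = c) (hφb : φ b = 0) :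
    IsOrthomorphism φ ∧ {a : F | θ a ≠ φ a}.ncard = 3 := by
  have hφoff : ∀ w, w ≠ 0 → w ≠ c → w ≠ b → φ w = θ w := fun w hw0 hwc hwb =>
    hφ w (by simp [hw0, hwb, hwc])
  have hφ0' : φ 0 = θ c := hφ0.trans hθc.symm
  have hφc' : φ c = θ b := hφc.trans hθb.symm
  have hφb' : φ b = θ 0 := hφb.trans h0.symm
  refine ⟨⟨hθ.1.of_three_cycle hc.symm hb.symm hbc.symm hφoff hφ0' hφc' hφb', ?_⟩, ?_⟩
  · refine hθ.2.of_three_cycle hb.symm hc.symm hbc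
      (fun w hw0 hwb hwc => by simp [hφoff w hw0 hwc hwb]) ?_ ?_ ?_ <;>
      simp only [hφ0, hφb, hφc, hθb, hθc, h0] <;> ring
  · rw [hθ.1.injective.setOf_ne_eq_of_three_cycle hc.symm hb.symm hbc.symm hφoff hφ0' hφc' hφb',
      Set.ncard_eq_three]
    exact ⟨0, c, b, hc.symm, hb.symm, hbc.symm, rfl⟩

/-- Modifying an orthomorphism with `θ 0 = 0`, `θ b = c`, `θ c = c - b` on the three
points `0, b, c` yields another orthomorphism at Hamming distance 3. -/
theorem orth_modify {F : Type*} [Field F] [Fintype F]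
    (θ φ : F → F) (b c : F) (hb : b ≠ 0) (hc : c ≠ 0) (hbc : b ≠ c)
    (hθ : IsOrthomorphism θ) (h0 : θ 0 = 0) (hθb : θ b = c) (hθc : θ c = c - b)
    (hφ : ∀ x : F, x ∉ ({0, b, c} : Set F) → φ x = θ x)
    (hφ0 : φ 0 = c - b) (hφc : φ c = c) (hφb : φ b = 0) :
    IsOrthomorphism φ ∧ {a : F | θ a ≠ φ a}.ncard = 3 :=
  orth_modify_general θ φ b c hb hc hbc hθ h0 hθb hθc hφ hφ0 hφc hφb
end

section
/- Let q = 2^r, a ∈ F_q \ {0,1}, H = {0,1,a,a+1}, c ∈ F_q \ H, and suppose a³ + (c+1)a² + ca + c = 0. Let θ_a be defined by θ_a(x) = ax + a(a+1) for x ∈ H + c and θ_a(x) = ax otherwise, and set b = c/a. If b ∉ H + c, then θ_a(b) = c and θ_a(c) = c + b. -/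
/-- With `θ_a` as in the characteristic-2 construction and `a` a root of
`x³ + (c+1)x² + cx + c`, setting `b = c/a ∉ H + c` we get `θ_a(b) = c` and
`θ_a(c) = c + b`. -/
theorem theta_values {F : Type*} [Field F] [Fintype F]
    (r : ℕ) (hcard : Fintype.card F = 2 ^ r)
    (a : F) (ha0 : a ≠ 0) (ha1 : a ≠ 1)
    (c : F) (hc : c ∉ ({0, 1, a, a + 1} : Set F))
    (hroot : a ^ 3 + (c + 1) * a ^ 2 + c * a + c = 0)
    (θ : F → F)
    (hθ1 : ∀ x ∈ ({c, c + 1, c + a, c + a + 1} : Set F), θ x = a * x + a * (a + 1))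
    (hθ2 : ∀ x ∉ ({c, c + 1, c + a, c + a + 1} : Set F), θ x = a * x)
    (hb : c / a ∉ ({c, c + 1, c + a, c + a + 1} : Set F)) :
    θ (c / a) = c ∧ θ c = c + c / a := by
  have h2 : (2 : F) = 0 := by
    have hc0 : ((Fintype.card F : ℕ) : F) = 0 := FiniteField.cast_card_eq_zero F
    rw [hcard] at hc0
    push_cast at hc0
    have hr : r ≠ 0 := by
      rintro rfl
      simp at hc0
    exact pow_eq_zero_iff hr |>.mp hc0
  constructor
  · rw [hθ2 _ hb]
    field_simp
  · rw [hθ1 c (by simp)]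
    field_simp
    linear_combination (a + 1) * hroot + (a ^ 2 + c * a) * h2 - a * hroot + (-3*a*c - a^2 - a^2*c - a^3 - c) * h2 + (a*c + a^2*c + a^3) * h2
end
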